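/- Define a sequence of graphs by H₀ = C₇ (the 7-cycle) and, for i ≥ 1, let Hᵢ be obtained from i+2 vertex-disjoint copies H¹,…,H^{i+2} of H_{i-1} by adding, for each (i+2)-tuple (v¹,…,v^{i+2}) of vertices with vʲ ∈ V(Hʲ), a new vertex adjacent exactly to v¹,…,v^{i+2}. Then for every i ≥ 0, χ(Hᵢ) = i + 3. -/

import Mathlib

/-- The construction adding, for each `k`-tuple of vertices across `k` disjoint
copies of `H`, a new vertex adjacent exactly to the vertices of the tuple. -/
def tupleExtension {V : Type} (H : SimpleGraph V) (k : ℕ) :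
    SimpleGraph ((Fin k × V) ⊕ (Fin k → V)) :=
  SimpleGraph.fromRel fun a b =>
    match a, b with
    | Sum.inl (i, u), Sum.inl (j, v) => i = j ∧ H.Adj u v
    | Sum.inl (i, u), Sum.inr f => f i = u
    | Sum.inr f, Sum.inl (i, u) => f i = u
    | Sum.inr _, Sum.inr _ => False

/-- The sequence `H₀ = C₇`, and `Hᵢ` obtained from `i+2` disjoint copies of
`H_{i-1}` by the tuple-extension construction. -/
def Hseq : (i : ℕ) → Σ V : Type, SimpleGraph V
  | 0 => ⟨Fin 7, SimpleGraph.cycleGraph 7⟩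
  | (i + 1) => ⟨_, tupleExtension (Hseq i).2 (i + 3)⟩

/-!
If `χ(H) = k`, the `k` copies of `H` can be coloured with `k` colours and all new vertices with
one extra colour, so `χ(tupleExtension H k) ≤ k + 1`. Conversely, in a `k`-colouring every copy
uses all `k` colours, so one can pick a vertex of colour `j` in the `j`-th copy for each `j`; the
new vertex attached to this tuple sees every colour. Induct from `χ(C₇) = 3`.
-/

open SimpleGraph

section tupleExtension

variable {V : Type} {H : SimpleGraph V} {k : ℕ}

@[simp]
lemma tupleExtension_adj_inl_inl {i j : Fin k} {u v : V} :
    (tupleExtension H k).Adj (.inl (i, u)) (.inl (j, v)) ↔ i = j ∧ H.Adj u v := by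
  simp only [tupleExtension, fromRel_adj, ne_eq, Sum.inl.injEq, Prod.mk.injEq]
  constructor
  · rintro ⟨-, h | ⟨rfl, h⟩⟩
    · exact h
    · exact ⟨rfl, h.symm⟩
  · rintro ⟨rfl, h⟩
    exact ⟨fun ⟨_, e⟩ => h.ne e, .inl ⟨rfl, h⟩⟩

@[simp]
lemma tupleExtension_adj_inr_inl {f : Fin k → V} {j : Fin k} {v : V} :
    (tupleExtension H k).Adj (.inr f) (.inl (j, v)) ↔ f j = v := by
  simp [tupleExtension]

def tupleExtension.copy (j : Fin k) : H →g tupleExtension H k where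
  toFun u := .inl (j, u)
  map_rel' h := tupleExtension_adj_inl_inl.mpr ⟨rfl, h⟩

lemma tupleExtension_colorable_succ (h : H.Colorable k) :
    (tupleExtension H k).Colorable (k + 1) := by
  obtain ⟨C⟩ := h
  refine ⟨Coloring.mk (Sum.elim (fun p => (C p.2).castSucc) fun _ => Fin.last k) ?_⟩
  rintro (⟨i, u⟩ | f) (⟨j, v⟩ | g) hadj
  · exact fun e => C.valid (tupleExtension_adj_inl_inl.mp hadj).2 (Fin.castSucc_injective _ e)
  · exact (Fin.castSucc_lt_last _).ne
  · exact (Fin.castSucc_lt_last _).ne'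
  · simp [tupleExtension] at hadj

lemma tupleExtension_not_colorable (h : (k : ℕ∞) ≤ H.chromaticNumber) :
    ¬ (tupleExtension H k).Colorable k := by
  rintro ⟨C⟩
  have hsurj := le_chromaticNumber_iff_forall_surjective.mp h
  choose f hf using fun j : Fin k => hsurj (C.comp (tupleExtension.copy j)) j
  exact C.valid (tupleExtension_adj_inr_inl.mpr rfl) (hf (C (.inr f))).symm

lemma chromaticNumber_tupleExtension (h : H.chromaticNumber = k) :
    (tupleExtension H k).chromaticNumber = k + 1 :=
  chromaticNumber_eq_iff_colorable_not_colorable.mpr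
    ⟨tupleExtension_colorable_succ (chromaticNumber_le_iff_colorable.mp h.le),
      tupleExtension_not_colorable h.ge⟩

end tupleExtension

theorem stmt_4 (i : ℕ) : (Hseq i).2.chromaticNumber = (i : ℕ∞) + 3 := by
  induction i with
  | zero => simpa [Hseq] using chromaticNumber_cycleGraph_of_odd 7 (by norm_num) (by decide)
  | succ i ih =>
    have ih' : (Hseq i).2.chromaticNumber = ((i + 3 : ℕ) : ℕ∞) := by exact_mod_cast ih
    calc (Hseq (i + 1)).2.chromaticNumber = ((i + 3 : ℕ) : ℕ∞) + 1 :=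
          chromaticNumber_tupleExtension ih'
      _ = ((i + 1 : ℕ) : ℕ∞) + 3 := by push_cast; ring
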